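/- Let k be an odd positive integer, let t = (k+1)/2, and let n be a positive integer divisible by t. Then f(n,k) ≥ C(n,3) − t·C(n/t,3), where C(a,3) denotes the binomial coefficient. -/

import Mathlib

/-!
Cut `[n]` into `t` consecutive blocks of size `m = n / t` and label the edge `uv` by
`1 + (block of u) + (block of v)`, a label in `[1, 2t - 1] = [1, k]`. For `u < v < w` the triple is
bad exactly when `block u ≥ block w`, which forces `u, v, w` into a single block; hence there are
at most `t · C(m, 3)` bad triples.
-/

open Finset
open scoped Classical

/-- Edge set of the natural tight path `P^{(r)}_s` on vertex set `[s] = {1,…,s}`: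
all intervals of `r` consecutive integers. -/
def pathEdges (r s : ℕ) : Finset (Finset ℕ) :=
  (Finset.Icc 1 (s - r + 1)).image (fun i => Finset.Icc i (i + r - 1))

/-- Edge set of the loose path `LP^{(r)}_s`: only the first and last edges. -/
def loosePathEdges (r s : ℕ) : Finset (Finset ℕ) :=
  {Finset.Icc 1 r, Finset.Icc (s - r + 1) s}

/-- `C` is the edge set of a copy in `K^{(r)}_n` of the ordered hypergraph with
vertex set `[s]` and edge set `E`, i.e. the image of `E` under a strictly
increasing map `[s] → [n]`. -/
def IsCopy (n s : ℕ) (E : Finset (Finset ℕ)) (C : Finset (Finset ℕ)) : Prop :=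
  ∃ f : ℕ → ℕ, StrictMonoOn f ↑(Finset.Icc 1 s) ∧
    (∀ v ∈ Finset.Icc 1 s, f v ∈ Finset.Icc 1 n) ∧
    C = E.image (fun e => e.image f)

/-- A transversal: a set `T` of `r`-element subsets of `[n]` meeting every copy. -/
def IsTransversal (n r s : ℕ) (E : Finset (Finset ℕ)) (T : Finset (Finset ℕ)) : Prop :=
  T ⊆ (Finset.Icc 1 n).powersetCard r ∧
  ∀ C : Finset (Finset ℕ), IsCopy n s E C → ∃ e ∈ C, e ∈ T

/-- The transversal number `τ(n,H)`. -/
noncomputable def tau (n r s : ℕ) (E : Finset (Finset ℕ)) : ℕ :=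
  sInf {m | ∃ T : Finset (Finset ℕ), IsTransversal n r s E T ∧ T.card = m}

/-- A packing: an edge-disjoint family of copies. -/
def IsPacking (n s : ℕ) (E : Finset (Finset ℕ)) (P : Finset (Finset (Finset ℕ))) : Prop :=
  (∀ C ∈ P, IsCopy n s E C) ∧
  ∀ C ∈ P, ∀ C' ∈ P, C ≠ C' → Disjoint C C'

/-- The packing number `ν(n,H)`. -/
noncomputable def nu (n s : ℕ) (E : Finset (Finset ℕ)) : ℕ :=
  sSup {m | ∃ P : Finset (Finset (Finset ℕ)), IsPacking n s E P ∧ P.card = m}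

/-- The ordered Turán number: maximum number of edges of a subgraph of
`K^{(r)}_n` containing no copy of the hypergraph with edge set `E`. -/
noncomputable def exNum (n r s : ℕ) (E : Finset (Finset ℕ)) : ℕ :=
  sSup {m | ∃ G ⊆ (Finset.Icc 1 n).powersetCard r,
    (∀ C : Finset (Finset ℕ), IsCopy n s E C → ¬ C ⊆ G) ∧ G.card = m}

/-- `S ⊆ [n]` is `m`-left-biased. -/
def LeftBiased (n m : ℕ) (S : Finset ℕ) : Prop :=
  ∃ u ≤ n / 2, (S ∩ Finset.Icc 1 u).card = m ∧ S ∩ Finset.Icc (n + 1 - u) n = ∅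

/-- `h(n,t,m)`: the number of `m`-left-biased `t`-element subsets of `[n]`. -/
noncomputable def hcount (n t m : ℕ) : ℕ :=
  (((Finset.Icc 1 n).powersetCard t).filter (LeftBiased n m)).card

/-- A fractional transversal. -/
def IsFracTransversal (n r s : ℕ) (E : Finset (Finset ℕ)) (w : Finset ℕ → ℝ) : Prop :=
  (∀ e ∈ (Finset.Icc 1 n).powersetCard r, 0 ≤ w e) ∧
  ∀ C : Finset (Finset ℕ), IsCopy n s E C → 1 ≤ ∑ e ∈ C, w e

/-- The fractional transversal number `τ*(n,H)`. -/
noncomputable def tauStar (n r s : ℕ) (E : Finset (Finset ℕ)) : ℝ :=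
  sInf {x : ℝ | ∃ w : Finset ℕ → ℝ, IsFracTransversal n r s E w ∧
    x = ∑ e ∈ (Finset.Icc 1 n).powersetCard r, w e}

/-- A `k`-edge-labeling of the ordered complete graph on `[n]`. -/
def IsLabeling (n k : ℕ) (φ : ℕ → ℕ → ℕ) : Prop :=
  ∀ u v : ℕ, u ∈ Finset.Icc 1 n → v ∈ Finset.Icc 1 n → u < v → φ u v ∈ Finset.Icc 1 k

/-- The number of good triples `u < v < w` in `[n]` (those with `φ(uv) < φ(vw)`). -/
def goodCount (n : ℕ) (φ : ℕ → ℕ → ℕ) : ℕ :=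
  (((Finset.Icc 1 n) ×ˢ (Finset.Icc 1 n) ×ˢ (Finset.Icc 1 n)).filter
    (fun p => p.1 < p.2.1 ∧ p.2.1 < p.2.2 ∧ φ p.1 p.2.1 < φ p.2.1 p.2.2)).card

/-- The number of bad triples `u < v < w` in `[n]` (those with `φ(uv) ≥ φ(vw)`). -/
def badCount (n : ℕ) (φ : ℕ → ℕ → ℕ) : ℕ :=
  (((Finset.Icc 1 n) ×ˢ (Finset.Icc 1 n) ×ˢ (Finset.Icc 1 n)).filter
    (fun p => p.1 < p.2.1 ∧ p.2.1 < p.2.2 ∧ ¬ φ p.1 p.2.1 < φ p.2.1 p.2.2)).card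

/-- `f(n,k)`: the maximum number of good triples over all `k`-edge-labelings of `[n]`. -/
noncomputable def fmax (n k : ℕ) : ℕ :=
  sSup {m | ∃ φ : ℕ → ℕ → ℕ, IsLabeling n k φ ∧ goodCount n φ = m}

/-- A labeling is monotone if `φ(uv) ≤ φ(vw)` whenever `u < v < w` in `[n]`. -/
def IsMonotone (n : ℕ) (φ : ℕ → ℕ → ℕ) : Prop :=
  ∀ u v w : ℕ, u ∈ Finset.Icc 1 n → v ∈ Finset.Icc 1 n → w ∈ Finset.Icc 1 n →
    u < v → v < w → φ u v ≤ φ v w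

/-- `Φ_L(v) = max{φ(uv) : u < v}`, with `Φ_L(1) = 0`. -/
def PhiL (φ : ℕ → ℕ → ℕ) (v : ℕ) : ℕ := (Finset.Ico 1 v).sup (fun u => φ u v)

/-- `Φ_R(v) = min{φ(vw) : v < w ≤ n}`, with `Φ_R(n) = k+1`. -/
noncomputable def PhiR (n k : ℕ) (φ : ℕ → ℕ → ℕ) (v : ℕ) : ℕ :=
  if v = n then k + 1 else sInf {m | ∃ w ∈ Finset.Ioc v n, φ v w = m}

/-- `X_i = {v ∈ [n] : Φ_L(v) = i}`. -/
def XL (n : ℕ) (φ : ℕ → ℕ → ℕ) (i : ℕ) : Finset ℕ :=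
  (Finset.Icc 1 n).filter (fun v => PhiL φ v = i)

/-- `X̂_i = {v ∈ [n] : Φ_R(v) = i}`. -/
noncomputable def XR (n k : ℕ) (φ : ℕ → ℕ → ℕ) (i : ℕ) : Finset ℕ :=
  (Finset.Icc 1 n).filter (fun v => PhiR n k φ v = i)

section IncreasingTriples

variable {α : Type*} [LinearOrder α]

def increasingTriples (S : Finset α) : Finset (α × α × α) :=
  (S ×ˢ S ×ˢ S).filter (fun p => p.1 < p.2.1 ∧ p.2.1 < p.2.2)

theorem card_increasingTriples (S : Finset α) :
    #(increasingTriples S) = (#S).choose 3 := by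
  rw [← card_powersetCard 3 S]
  refine card_nbij (fun p => {p.1, p.2.1, p.2.2}) ?_ ?_ ?_
  · rintro ⟨a, b, c⟩ hp
    simp only [increasingTriples, coe_filter, mem_product, Set.mem_ofPred_eq] at hp
    obtain ⟨⟨ha, hb, hc⟩, hab, hbc⟩ := hp
    rw [mem_coe, mem_powersetCard, card_eq_three]
    refine ⟨?_, a, b, c, hab.ne, (hab.trans hbc).ne, hbc.ne, rfl⟩
    intro x hx
    simp only [mem_insert, mem_singleton] at hx
    rcases hx with rfl | rfl | rfl <;> assumption
  · rintro ⟨a, b, c⟩ hp ⟨d, e, f⟩ hq h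
    simp only [increasingTriples, coe_filter, Set.mem_ofPred_eq] at hp hq
    have key : ∀ x, x = a ∨ x = b ∨ x = c ↔ x = d ∨ x = e ∨ x = f := by
      intro x; simpa using congrArg (x ∈ ·) h
    have := key a; have := key b; have := key c; have := key d; have := key e; have := key f
    grind
  · intro s hs
    rw [mem_coe, mem_powersetCard] at hs
    refine ⟨(s.orderEmbOfFin hs.2 0, s.orderEmbOfFin hs.2 1, s.orderEmbOfFin hs.2 2), ?_, ?_⟩
    · simp only [increasingTriples, coe_filter, mem_product, Set.mem_ofPred_eq]
      exact ⟨⟨hs.1 (s.orderEmbOfFin_mem _ 0), hs.1 (s.orderEmbOfFin_mem _ 1),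
          hs.1 (s.orderEmbOfFin_mem _ 2)⟩,
        (s.orderEmbOfFin hs.2).strictMono (by decide),
        (s.orderEmbOfFin hs.2).strictMono (by decide)⟩
    · conv_rhs => rw [← s.image_orderEmbOfFin_univ hs.2]
      ext x
      simp only [mem_insert, mem_singleton, mem_image, mem_univ, true_and]
      constructor
      · rintro (rfl | rfl | rfl) <;> exact ⟨_, rfl⟩
      · rintro ⟨i, rfl⟩
        fin_cases i <;> simp

end IncreasingTriples

theorem goodCount_add_badCount (n : ℕ) (φ : ℕ → ℕ → ℕ) :
    goodCount n φ + badCount n φ = n.choose 3 := by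
  have h := card_filter_add_card_filter_not (s := increasingTriples (Icc 1 n))
    (fun p => φ p.1 p.2.1 < φ p.2.1 p.2.2)
  rw [card_increasingTriples, Nat.card_Icc, Nat.add_sub_cancel] at h
  simpa only [goodCount, badCount, increasingTriples, filter_filter, and_assoc] using h

theorem goodCount_le_fmax {n k : ℕ} {φ : ℕ → ℕ → ℕ} (hφ : IsLabeling n k φ) :
    goodCount n φ ≤ fmax n k := by
  refine le_csSup ⟨n.choose 3, ?_⟩ ⟨φ, hφ, rfl⟩
  rintro _ ⟨ψ, -, rfl⟩
  exact (Nat.le_add_right _ _).trans (goodCount_add_badCount n ψ).le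

section Blocks

variable {t m x : ℕ}

theorem pred_div_lt (hx : x ∈ Icc 1 (t * m)) : (x - 1) / m < t := by
  rw [mem_Icc] at hx
  exact (Nat.div_lt_iff_lt_mul (Nat.pos_of_mul_pos_left (hx.1.trans hx.2))).2 (by omega)

theorem mem_Ioc_pred_div (hx : x ∈ Icc 1 (t * m)) :
    x ∈ Ioc (m * ((x - 1) / m)) (m * ((x - 1) / m) + m) := by
  rw [mem_Icc] at hx
  have hm : 0 < m := Nat.pos_of_mul_pos_left (hx.1.trans hx.2)
  have hdiv := Nat.div_add_mod (x - 1) m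
  have hmod := Nat.mod_lt (x - 1) hm
  rw [mem_Ioc]
  omega

end Blocks

/-- Vertex `x ∈ [t * m]` lies in the block `(x - 1) / m ∈ {0, …, t - 1}`. -/
def blockLabel (m u v : ℕ) : ℕ := (u - 1) / m + (v - 1) / m + 1

theorem blockLabel_isLabeling (t m : ℕ) : IsLabeling (t * m) (2 * t - 1) (blockLabel m) := by
  intro u v hu hv _
  have hu' := pred_div_lt hu
  have hv' := pred_div_lt hv
  rw [mem_Icc, blockLabel]
  generalize (u - 1) / m = a at *
  generalize (v - 1) / m = b at *
  omega

theorem div_eq_div_of_not_blockLabel_lt {m u v w : ℕ} (huv : u < v) (hvw : v < w)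
    (h : ¬ blockLabel m u v < blockLabel m v w) :
    (u - 1) / m = (v - 1) / m ∧ (v - 1) / m = (w - 1) / m := by
  have h₁ : (u - 1) / m ≤ (v - 1) / m := Nat.div_le_div_right (by omega)
  have h₂ : (v - 1) / m ≤ (w - 1) / m := Nat.div_le_div_right (by omega)
  unfold blockLabel at h
  omega

theorem badCount_blockLabel_le (t m : ℕ) :
    badCount (t * m) (blockLabel m) ≤ t * m.choose 3 := by
  have hsub : ((Icc 1 (t * m)) ×ˢ (Icc 1 (t * m)) ×ˢ (Icc 1 (t * m))).filter (fun p =>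
      p.1 < p.2.1 ∧ p.2.1 < p.2.2 ∧ ¬ blockLabel m p.1 p.2.1 < blockLabel m p.2.1 p.2.2) ⊆
      (range t).biUnion (fun b => increasingTriples (Ioc (m * b) (m * b + m))) := by
    rintro ⟨u, v, w⟩ hp
    simp only [mem_filter, mem_product] at hp
    obtain ⟨⟨hu, hv, hw⟩, huv, hvw, hbad⟩ := hp
    obtain ⟨h₁, h₂⟩ := div_eq_div_of_not_blockLabel_lt huv hvw hbad
    refine mem_biUnion.2 ⟨(u - 1) / m, mem_range.2 (pred_div_lt hu), ?_⟩
    simp only [increasingTriples, mem_filter, mem_product]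
    refine ⟨⟨mem_Ioc_pred_div hu, ?_, ?_⟩, huv, hvw⟩
    · simpa only [h₁] using mem_Ioc_pred_div hv
    · simpa only [h₁, h₂] using mem_Ioc_pred_div hw
  calc badCount (t * m) (blockLabel m)
      ≤ ∑ b ∈ range t, #(increasingTriples (Ioc (m * b) (m * b + m))) :=
        (card_le_card hsub).trans card_biUnion_le
    _ = t * m.choose 3 := by
        simp only [card_increasingTriples, Nat.card_Ioc, Nat.add_sub_cancel_left, sum_const,
          card_range, smul_eq_mul]

theorem stmt12_general (k t n : ℕ) (hk : Odd k) (ht : t = (k + 1) / 2) (htn : t ∣ n) :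
    n.choose 3 - t * (n / t).choose 3 ≤ fmax n k := by
  obtain ⟨j, rfl⟩ := hk
  obtain ⟨m, rfl⟩ := htn
  have ht0 : 0 < t := by omega
  rw [Nat.mul_div_cancel_left m ht0, show 2 * j + 1 = 2 * t - 1 by omega]
  have hsum := goodCount_add_badCount (t * m) (blockLabel m)
  have hbad := badCount_blockLabel_le t m
  calc (t * m).choose 3 - t * m.choose 3 ≤ goodCount (t * m) (blockLabel m) := by omega
    _ ≤ fmax (t * m) (2 * t - 1) := goodCount_le_fmax (blockLabel_isLabeling t m)

/-- For odd positive `k`, `t = (k+1)/2` and `t ∣ n` with `n > 0`,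
`f(n,k) ≥ C(n,3) - t·C(n/t,3)`. -/
theorem stmt12 (k t n : ℕ) (hk : Odd k) (hk0 : 0 < k) (ht : t = (k + 1) / 2)
    (hn : 0 < n) (htn : t ∣ n) :
    n.choose 3 - t * (n / t).choose 3 ≤ fmax n k :=
  stmt12_general k t n hk ht htn
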